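/- arXiv:2304.00883 — 6 statements merged into one kernel-verified Lean document; each statement's English description precedes it below -/
import Mathlib

section
/- Let f : ℂ → ℂ be holomorphic near 0 with f(0) = 0 and λ := f'(0) satisfying 0 < |λ| < 1. Then the limit φ(z) = lim_{n→∞} fⁿ(z)/λⁿ exists for all z in a sufficiently small neighborhood of 0, the convergence is uniform on that neighborhood, φ is holomorphic with φ(0) = 0 and φ'(0) = 1, and φ(f(z)) = λ·φ(z) for z near 0. -/
/-!
Near `0` we have `f z = λ z + O(|z|²)`. Choose `|λ| < c < √|λ|`: on a small ball `f` contracts by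
the factor `c`, so `|fⁿ z| ≤ cⁿ |z|`, and consecutive rescaled iterates differ by
`(f (fⁿ z) - λ fⁿ z) / λⁿ⁺¹ = O((c² / |λ|)ⁿ)`, a geometric error since `c² < |λ|`. The uniform limit
`φ` is holomorphic by Weierstrass, `φ' 0 = 1` because every rescaled iterate has derivative `1`
at `0`, and `φ ∘ f = λ φ` is the shift `fⁿ (f z) / λⁿ = λ · fⁿ⁺¹ z / λⁿ⁺¹` in the limit.
-/

open Filter Topology Asymptotics Metric Set

theorem HasFPowerSeriesAt.isBigO_sub_sub_smul_coeff_one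
    {𝕜 E : Type*} [NontriviallyNormedField 𝕜] [NormedAddCommGroup E] [NormedSpace 𝕜 E]
    {f : 𝕜 → E} {p : FormalMultilinearSeries 𝕜 𝕜 E} {x : 𝕜} (hp : HasFPowerSeriesAt f p x) :
    (fun y => f y - f x - (y - x) • deriv f x) =O[𝓝 x] fun y => ‖y - x‖ ^ 2 := by
  have hsum : ∀ y, p.partialSum 2 y = f x + y • deriv f x := by
    intro y
    have h0 : p.coeff 0 = f x := hp.coeff_zero 1
    simp [FormalMultilinearSeries.partialSum, Finset.sum_range_succ, hp.deriv, h0]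
  have h := (hp.isBigO_sub_partialSum_pow 2).comp_tendsto
    (tendsto_sub_nhds_zero_iff.mpr (tendsto_id (x := 𝓝 x)))
  simpa [Function.comp_def, hsum, sub_sub] using h

theorem AnalyticAt.isBigO_sub_sub_smul_deriv
    {𝕜 E : Type*} [NontriviallyNormedField 𝕜] [NormedAddCommGroup E] [NormedSpace 𝕜 E]
    {f : 𝕜 → E} {x : 𝕜} (hf : AnalyticAt 𝕜 f x) :
    (fun y => f y - f x - (y - x) • deriv f x) =O[𝓝 x] fun y => ‖y - x‖ ^ 2 :=
  let ⟨_, hp⟩ := hf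
  hp.isBigO_sub_sub_smul_coeff_one

theorem eventually_norm_le_mul_norm_of_isBigO_sq
    {𝕜 : Type*} [NontriviallyNormedField 𝕜] {f : 𝕜 → 𝕜} {l : 𝕜} {c : ℝ}
    (hf : (fun y => f y - l * y) =O[𝓝 0] fun y => ‖y‖ ^ 2) (hc : ‖l‖ < c) :
    ∀ᶠ y in 𝓝 0, ‖f y‖ ≤ c * ‖y‖ := by
  have hsq : (fun y : 𝕜 => ‖y‖ ^ 2) =o[𝓝 0] fun y => ‖y‖ :=
    (isLittleO_pow_id one_lt_two).comp_tendsto tendsto_norm_zero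
  filter_upwards [(hf.trans_isLittleO hsq).def (sub_pos.mpr hc)] with y hy
  calc ‖f y‖ ≤ ‖f y - l * y‖ + ‖l * y‖ := norm_le_norm_sub_add _ _
    _ ≤ (c - ‖l‖) * ‖y‖ + ‖l‖ * ‖y‖ := by
        rw [norm_norm] at hy
        rw [norm_mul]
        exact add_le_add_left hy _
    _ = c * ‖y‖ := by ring

theorem mapsTo_ball_zero_of_norm_le_mul {E : Type*} [SeminormedAddGroup E] {f : E → E}
    {c r : ℝ} (hc : c ≤ 1) (hf : ∀ z ∈ ball 0 r, ‖f z‖ ≤ c * ‖z‖) :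
    MapsTo f (ball 0 r) (ball 0 r) := fun z hz => by
  rw [mem_ball_zero_iff] at hz ⊢
  nlinarith [hf z (mem_ball_zero_iff.mpr hz), norm_nonneg z]

theorem norm_iterate_le_pow_mul_norm {E : Type*} [SeminormedAddGroup E] {f : E → E}
    {s : Set E} {c : ℝ} (hc : 0 ≤ c) (hs : MapsTo f s s) (hf : ∀ z ∈ s, ‖f z‖ ≤ c * ‖z‖)
    {z : E} (hz : z ∈ s) (n : ℕ) : ‖f^[n] z‖ ≤ c ^ n * ‖z‖ := by
  induction n with
  | zero => simp
  | succ n ih =>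
    rw [Function.iterate_succ_apply']
    calc ‖f (f^[n] z)‖ ≤ c * ‖f^[n] z‖ := hf _ (hs.iterate n hz)
      _ ≤ c * (c ^ n * ‖z‖) := by gcongr
      _ = c ^ (n + 1) * ‖z‖ := by ring

theorem exists_tendstoUniformlyOn_of_dist_le_geometric {α E : Type*} [PseudoMetricSpace E]
    [CompleteSpace E] [Nonempty E] {F : ℕ → α → E} {s : Set α} {C q : ℝ} (hq0 : 0 ≤ q)
    (hq1 : q < 1)
    (hF : ∀ x ∈ s, ∀ n, dist (F n x) (F (n + 1) x) ≤ C * q ^ n) :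
    ∃ φ : α → E, TendstoUniformlyOn F φ atTop s := by
  refine ⟨fun x => limUnder atTop (F · x), ?_⟩
  have hlim : ∀ x ∈ s, Tendsto (F · x) atTop (𝓝 (limUnder atTop (F · x))) := fun x hx =>
    (cauchySeq_of_le_geometric q C hq1 (hF x hx)).tendsto_limUnder
  have hbound : Tendsto (fun n => C * q ^ n / (1 - q)) atTop (𝓝 0) := by
    simpa using ((tendsto_pow_atTop_nhds_zero_of_lt_one hq0 hq1).const_mul C).div_const (1 - q)
  rw [Metric.tendstoUniformlyOn_iff]
  intro ε hε
  filter_upwards [hbound.eventually (gt_mem_nhds hε)] with n hn x hx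
  rw [dist_comm]
  exact (dist_le_of_le_geometric_of_tendsto q C hq1 (hF x hx) (hlim x hx) n).trans_lt hn

section RescaledIterates

variable {𝕜 : Type*} [NormedField 𝕜] {f : 𝕜 → 𝕜} {l : 𝕜}

theorem iterate_div_pow_apply_self (hl : l ≠ 0) (z : 𝕜) (n : ℕ) :
    f^[n] (f z) / l ^ n = l * (f^[n + 1] z / l ^ (n + 1)) := by
  rw [Function.iterate_succ_apply, pow_succ]
  field_simp

theorem apply_eq_mul_of_tendsto_iterate_div_pow {φ : 𝕜 → 𝕜} {z : 𝕜} (hl : l ≠ 0)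
    (hz : Tendsto (fun n => f^[n] z / l ^ n) atTop (𝓝 (φ z)))
    (hfz : Tendsto (fun n => f^[n] (f z) / l ^ n) atTop (𝓝 (φ (f z)))) :
    φ (f z) = l * φ z := by
  simp only [iterate_div_pow_apply_self hl] at hfz
  exact tendsto_nhds_unique hfz (((tendsto_add_atTop_iff_nat 1).mpr hz).const_mul l)

theorem dist_iterate_div_pow_le {s : Set 𝕜} {c K r : ℝ} (hl : l ≠ 0) (hc : 0 ≤ c)
    (hK : 0 ≤ K) (hs : MapsTo f s s) (hsr : ∀ z ∈ s, ‖z‖ ≤ r)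
    (hfc : ∀ z ∈ s, ‖f z‖ ≤ c * ‖z‖) (hfl : ∀ z ∈ s, ‖f z - l * z‖ ≤ K * ‖z‖ ^ 2)
    {z : 𝕜} (hz : z ∈ s) (n : ℕ) :
    dist (f^[n] z / l ^ n) (f^[n + 1] z / l ^ (n + 1)) ≤ K * r ^ 2 / ‖l‖ * (c ^ 2 / ‖l‖) ^ n := by
  have hdiff : f^[n + 1] z / l ^ (n + 1) - f^[n] z / l ^ n
      = (f (f^[n] z) - l * f^[n] z) / l ^ (n + 1) := by
    rw [Function.iterate_succ_apply', pow_succ]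
    field_simp
  have hn : ‖f^[n] z‖ ≤ c ^ n * r :=
    (norm_iterate_le_pow_mul_norm hc hs hfc hz n).trans (by gcongr; exact hsr z hz)
  rw [dist_comm, dist_eq_norm, hdiff, norm_div, norm_pow]
  calc ‖f (f^[n] z) - l * f^[n] z‖ / ‖l‖ ^ (n + 1)
      ≤ K * (c ^ n * r) ^ 2 / ‖l‖ ^ (n + 1) := by
        gcongr
        exact (hfl _ (hs.iterate n hz)).trans (by gcongr)
    _ = K * r ^ 2 / ‖l‖ * (c ^ 2 / ‖l‖) ^ n := by
        have : ‖l‖ ≠ 0 := norm_ne_zero_iff.mpr hl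
        rw [div_pow, mul_pow, ← pow_mul, pow_succ]
        field_simp
        ring

end RescaledIterates

theorem TendstoLocallyUniformlyOn.deriv_eq_of_hasDerivAt {ι : Type*} {p : Filter ι} [p.NeBot]
    {F : ι → ℂ → ℂ} {φ : ℂ → ℂ} {U : Set ℂ} {z d : ℂ} (hF : TendstoLocallyUniformlyOn F φ p U)
    (hFU : ∀ n, DifferentiableOn ℂ (F n) U) (hU : IsOpen U) (hz : z ∈ U)
    (hd : ∀ n, HasDerivAt (F n) d z) : _root_.deriv φ z = d :=
  tendsto_nhds_unique ((hF.deriv (.of_forall hFU) hU).tendsto_at hz) (by simp [(hd _).deriv])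

/-- Koenigs linearization: if `f` is holomorphic near `0` with `f 0 = 0` and
multiplier `λ = f' 0` satisfying `0 < |λ| < 1`, then the rescaled iterates
`fⁿ(z)/λⁿ` converge uniformly on a neighbourhood of `0` to a holomorphic map
`φ` with `φ 0 = 0`, `φ' 0 = 1` and `φ ∘ f = λ·φ` near `0`. -/
theorem koenigs_linearization
    (f : ℂ → ℂ) (hf : AnalyticAt ℂ f 0) (h0 : f 0 = 0)
    (hl0 : 0 < ‖deriv f 0‖) (hl1 : ‖deriv f 0‖ < 1) :
    ∃ U ∈ 𝓝 (0 : ℂ), ∃ φ : ℂ → ℂ,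
      TendstoUniformlyOn (fun n z => f^[n] z / (deriv f 0) ^ n) φ atTop U ∧
      (∀ z ∈ U, AnalyticAt ℂ φ z) ∧
      φ 0 = 0 ∧ deriv φ 0 = 1 ∧
      ∀ᶠ z in 𝓝 (0 : ℂ), φ (f z) = deriv f 0 * φ z := by
  set l := deriv f 0
  have hl : l ≠ 0 := norm_pos_iff.mp hl0
  obtain ⟨c, hlc, hcl⟩ := exists_between (Real.lt_sqrt_self_iff.mpr ⟨hl0.ne', hl1⟩)
  have hc0 : 0 ≤ c := hl0.le.trans hlc.le
  have hc2 : c ^ 2 < ‖l‖ := (Real.lt_sqrt hc0).mp hcl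
  have hquad : (fun y => f y - l * y) =O[𝓝 0] fun y => ‖y‖ ^ 2 := by
    simpa [h0, mul_comm] using hf.isBigO_sub_sub_smul_deriv
  obtain ⟨K, hK, hKf⟩ := hquad.exists_pos
  obtain ⟨r, hr, hball⟩ := eventually_nhds_iff_ball.mp
    ((eventually_norm_le_mul_norm_of_isBigO_sq hquad hlc).and
      (hKf.bound.and hf.eventually_analyticAt))
  simp only [forall₂_and, norm_norm, norm_pow] at hball
  obtain ⟨hfc, hfl, hfa⟩ := hball
  have hU : MapsTo f (ball 0 r) (ball 0 r) := mapsTo_ball_zero_of_norm_le_mul (by nlinarith) hfc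
  obtain ⟨φ, hφ⟩ := exists_tendstoUniformlyOn_of_dist_le_geometric (by positivity)
    ((div_lt_one hl0).mpr hc2) fun z hz => dist_iterate_div_pow_le hl hc0 hK.le hU
      (fun z hz => (mem_ball_zero_iff.mp hz).le) hfc hfl hz
  have hFU : ∀ n, DifferentiableOn ℂ (fun z => f^[n] z / l ^ n) (ball 0 r) := fun n =>
    ((DifferentiableOn.iterate (fun z hz => (hfa z hz).differentiableWithinAt) hU n).div_const _)
  have hφU := hφ.tendstoLocallyUniformlyOn
  have h0U : (0 : ℂ) ∈ ball 0 r := mem_ball_self hr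
  refine ⟨ball 0 r, ball_mem_nhds 0 hr, φ, hφ,
    fun z hz => (hφU.differentiableOn (.of_forall hFU) isOpen_ball).analyticAt
      (isOpen_ball.mem_nhds hz), ?_, ?_, ?_⟩
  · exact tendsto_nhds_unique (hφ.tendsto_at h0U) (by simp [Function.iterate_fixed h0])
  · refine hφU.deriv_eq_of_hasDerivAt hFU isOpen_ball h0U fun n => ?_
    exact (((hfa 0 h0U).differentiableAt.hasDerivAt.iterate 0 h0 n).div_const (l ^ n)).congr_deriv
      (div_self (pow_ne_zero n hl))
  · filter_upwards [ball_mem_nhds 0 hr] with z hz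
    exact apply_eq_mul_of_tendsto_iterate_div_pow hl (hφ.tendsto_at hz) (hφ.tendsto_at (hU hz))
end

section
/- Let f, v : ℝ → ℝ be smooth, let c ∈ ℝ, q ≥ 1, and suppose v(f^i(c)) = 0 for all 1 ≤ i ≤ q-1, v(c) ≠ 0, and (f^{q-1})'(f(c)) ≠ 0. Then for the family f_t = f + t·v we have (d/dt) f_tᵠ(c) |_{t=0} ≠ 0. -/
/-- Chain rule for iterates: derivative of `f^[n]` at `x`. -/
lemma hasDerivAt_iterate_aux (f : ℝ → ℝ) (hf : ContDiff ℝ (⊤ : ℕ∞) f) :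
    ∀ (n : ℕ) (x : ℝ),
      HasDerivAt (f^[n]) (∏ i ∈ Finset.range n, deriv f (f^[i] x)) x := by
  intro n
  induction n with
  | zero => intro x; simpa using hasDerivAt_id x
  | succ n ih =>
      intro x
      have hfd : HasDerivAt f (deriv f (f^[n] x)) (f^[n] x) :=
        (hf.differentiable (by simp) (f^[n] x)).hasDerivAt
      have h := hfd.comp x (ih x)
      rw [Function.iterate_succ', Finset.prod_range_succ, mul_comm]
      exact h

/-- Transversality for destroying a critical relation: if `v` vanishes along
the orbit `f(c), …, f^{q-1}(c)` but `v c ≠ 0` and `(f^{q-1})'(f c) ≠ 0`, then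
`(d/dt) f_tᵠ(c)|_{t=0} ≠ 0` for the family `f_t = f + t·v`. -/
theorem critical_relation_transversal
    (f v : ℝ → ℝ) (hf : ContDiff ℝ (⊤ : ℕ∞) f) (hv : ContDiff ℝ (⊤ : ℕ∞) v)
    (c : ℝ) (q : ℕ) (hq : 1 ≤ q)
    (hvorbit : ∀ i, 1 ≤ i → i ≤ q - 1 → v (f^[i] c) = 0)
    (hvc : v c ≠ 0)
    (hD : deriv (f^[q - 1]) (f c) ≠ 0) :
    deriv (fun t : ℝ => (fun y => f y + t * v y)^[q] c) 0 ≠ 0 := by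
  -- at t = 0 the perturbed map equals f
  have hzero : (fun y => f y + (0:ℝ) * v y) = f := by funext y; simp
  have hval : ∀ n, (fun y => f y + (0:ℝ) * v y)^[n] c = f^[n] c := by
    intro n; rw [hzero]
  -- key induction
  have key : ∀ n, n ≤ q - 1 →
      HasDerivAt (fun t : ℝ => (fun y => f y + t * v y)^[n + 1] c)
        ((∏ i ∈ Finset.range n, deriv f (f^[i] (f c))) * v c) 0 := by
    intro n
    induction n with
    | zero =>
        intro _
        have : HasDerivAt (fun t : ℝ => f c + t * v c) (v c) 0 := by
          simpa using ((hasDerivAt_id (0:ℝ)).mul_const (v c)).const_add (f c)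
        simpa using this
    | succ n ih =>
        intro hn
        have hn' : n ≤ q - 1 := Nat.le_of_succ_le hn
        have IH := ih hn'
        set G : ℝ → ℝ := fun t => (fun y => f y + t * v y)^[n + 1] c with hG
        have hG0 : G 0 = f^[n + 1] c := hval (n + 1)
        have hfd : HasDerivAt f (deriv f (f^[n+1] c)) (G 0) := by
          rw [hG0]; exact (hf.differentiable (by simp) _).hasDerivAt
        have h1 : HasDerivAt (fun t => f (G t))
            (deriv f (f^[n+1] c) *
              ((∏ i ∈ Finset.range n, deriv f (f^[i] (f c))) * v c)) 0 :=
          hfd.comp 0 IH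
        have hvd : HasDerivAt v (deriv v (G 0)) (G 0) :=
          (hv.differentiable (by simp) _).hasDerivAt
        have h2 : HasDerivAt (fun t => t * v (G t))
            (1 * v (G 0) + 0 * (deriv v (G 0) *
              ((∏ i ∈ Finset.range n, deriv f (f^[i] (f c))) * v c))) 0 :=
          (hasDerivAt_id (0:ℝ)).mul (hvd.comp 0 IH)
        have hv0 : v (G 0) = 0 := by
          rw [hG0]
          exact hvorbit (n + 1) (Nat.succ_le_succ (Nat.zero_le n)) hn
        have h3 := h1.add h2
        have heq : (fun t : ℝ => (fun y => f y + t * v y)^[n + 1 + 1] c)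
            = fun t => f (G t) + t * v (G t) := by
          funext t
          simp only [hG, Function.iterate_succ_apply']
        rw [heq]
        convert h3 using 1
        case e'_4 => rfl
        case e'_5 => rfl
        case e'_8 => rfl
        rw [hv0, Function.iterate_succ_apply, Finset.prod_range_succ]
        ring
  have hmain := key (q - 1) le_rfl
  rw [Nat.sub_add_cancel hq] at hmain
  rw [hmain.deriv]
  have hDeq : deriv (f^[q - 1]) (f c)
      = ∏ i ∈ Finset.range (q - 1), deriv f (f^[i] (f c)) :=
    (hasDerivAt_iterate_aux f hf (q - 1) (f c)).deriv
  rw [hDeq] at hD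
  exact mul_ne_zero hD hvc
end

section
/- Let f, v : ℝ → ℝ be smooth, f_t = f + t·v, and let c ∈ ℝ with integers 1 ≤ l < q. Suppose p := f^l(c) satisfies f^{q-l}(p) = p and μ := (f^{q-l})'(p) ≠ 1, and let t ↦ p_t be a smooth family with p_0 = p and f_t^{q-l}(p_t) = p_t for t near 0. Then (μ - 1) · (d/dt)(f_t^l(c) - p_t)|_{t=0} = (d/dt)(f_tᵠ(c) - f_t^l(c))|_{t=0}. In particular, (d/dt)(f_t^l(c) - p_t)|_{t=0} ≠ 0 if and only if (d/dt)(f_tᵠ(c) - f_t^l(c))|_{t=0} ≠ 0. -/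
open Filter Topology

/-- Variation of a critical relation relative to the continued periodic point:
with `p = f^l(c)` periodic of period `q - l` and multiplier `μ ≠ 1`, and `p_t`
the continuation of `p` for `f_t = f + t·v`,
`(μ - 1)·(d/dt)(f_t^l(c) - p_t)|₀ = (d/dt)(f_tᵠ(c) - f_t^l(c))|₀`; in
particular one derivative is nonzero iff the other is. -/
theorem critical_relation_vs_periodic_continuation
    (f v : ℝ → ℝ) (hf : ContDiff ℝ (⊤ : ℕ∞) f) (hv : ContDiff ℝ (⊤ : ℕ∞) v)
    (c : ℝ) (l q : ℕ) (hl : 1 ≤ l) (hlq : l < q)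
    (p : ℝ) (hp : p = f^[l] c) (hper : f^[q - l] p = p)
    (μ : ℝ) (hμ : μ = deriv (f^[q - l]) p) (hμ1 : μ ≠ 1)
    (P : ℝ → ℝ) (hP : ContDiff ℝ (⊤ : ℕ∞) P) (hP0 : P 0 = p)
    (hPper : ∀ᶠ t in 𝓝 (0 : ℝ), (fun y => f y + t * v y)^[q - l] (P t) = P t) :
    (μ - 1) * deriv (fun t : ℝ =>
        (fun y => f y + t * v y)^[l] c - P t) 0 =
      deriv (fun t : ℝ =>
        (fun y => f y + t * v y)^[q] c - (fun y => f y + t * v y)^[l] c) 0 ∧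
    (deriv (fun t : ℝ => (fun y => f y + t * v y)^[l] c - P t) 0 ≠ 0 ↔
      deriv (fun t : ℝ =>
        (fun y => f y + t * v y)^[q] c - (fun y => f y + t * v y)^[l] c) 0 ≠ 0) := by
  classical
  set Φ : ℝ × ℝ → ℝ × ℝ := fun z => (z.1, f z.2 + z.1 * v z.2) with hΦdef
  have hΦc : ContDiff ℝ (⊤ : ℕ∞) Φ :=
    contDiff_fst.prodMk ((hf.comp contDiff_snd).add (contDiff_fst.mul (hv.comp contDiff_snd)))
  have hΦn : ∀ n : ℕ, ContDiff ℝ (⊤ : ℕ∞) (Φ^[n]) := by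
    intro n
    induction n with
    | zero => simpa using contDiff_id
    | succ n ih =>
      rw [Function.iterate_succ]
      exact ih.comp hΦc
  have hiter : ∀ (n : ℕ) (t x : ℝ),
      Φ^[n] (t, x) = (t, (fun y => f y + t * v y)^[n] x) := by
    intro n
    induction n with
    | zero => intro t x; simp
    | succ n ih =>
      intro t x
      rw [Function.iterate_succ_apply, Function.iterate_succ_apply]
      exact ih t (f x + t * v x)
  set m := q - l with hm
  have hq : m + l = q := Nat.sub_add_cancel hlq.le
  -- the second components
  set gl : ℝ × ℝ → ℝ := fun z => (Φ^[l] z).2 with hgl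
  set gm : ℝ × ℝ → ℝ := fun z => (Φ^[m] z).2 with hgm
  have hglc : ContDiff ℝ (⊤ : ℕ∞) gl := contDiff_snd.comp (hΦn l)
  have hgmc : ContDiff ℝ (⊤ : ℕ∞) gm := contDiff_snd.comp (hΦn m)
  -- key derivative lemma
  have key : ∀ (g : ℝ × ℝ → ℝ), ContDiff ℝ (⊤ : ℕ∞) g → ∀ (x : ℝ → ℝ) (x' : ℝ),
      HasDerivAt x x' 0 →
      HasDerivAt (fun t => g (t, x t))
        (fderiv ℝ g (0, x 0) (1, 0) + x' * fderiv ℝ g (0, x 0) (0, 1)) 0 := by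
    intro g hg x x' hx
    have hgd : HasFDerivAt g (fderiv ℝ g (0, x 0)) (0, x 0) :=
      (hg.differentiable (by simp)).differentiableAt.hasFDerivAt
    have hc : HasDerivAt (fun t : ℝ => (t, x t)) ((1 : ℝ), x') 0 :=
      (hasDerivAt_id 0).prodMk hx
    have := hgd.comp_hasDerivAt 0 hc
    have heq : fderiv ℝ g (0, x 0) (1, x')
        = fderiv ℝ g (0, x 0) (1, 0) + x' * fderiv ℝ g (0, x 0) (0, 1) := by
      have h1 : ((1 : ℝ), x') = (1, 0) + x' • ((0 : ℝ), (1 : ℝ)) := by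
        simp [Prod.ext_iff]
      rw [h1, map_add, map_smul, smul_eq_mul]
    rwa [heq] at this
  -- A t = F_t^[l] c
  set A : ℝ → ℝ := fun t => gl (t, c) with hA
  have hA0 : A 0 = p := by
    simp only [hA, hgl]
    rw [hiter l 0 c]
    simp [hp]
  set α : ℝ := fderiv ℝ gl (0, c) (1, 0) with hα
  have hAd : HasDerivAt A α 0 := by
    have := key gl hglc (fun _ => c) 0 (hasDerivAt_const 0 c)
    simpa using this
  -- derivative of P
  set β : ℝ := deriv P 0 with hβ
  have hPd : HasDerivAt P β 0 := ((hP.differentiable (by simp)) 0).hasDerivAt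
  -- μ equals the partial derivative of gm in x
  set μ' : ℝ := fderiv ℝ gm (0, p) (0, 1) with hμ'
  have hf0 : (fun x => gm (0, x)) = f^[m] := by
    funext x
    simp only [hgm]
    rw [hiter m 0 x]
    simp
  have hμeq : μ = μ' := by
    have hcurve : HasDerivAt (fun x : ℝ => ((0 : ℝ), x)) ((0 : ℝ), (1 : ℝ)) p :=
      (hasDerivAt_const p (0 : ℝ)).prodMk (hasDerivAt_id p)
    have hgd : HasFDerivAt gm (fderiv ℝ gm (0, p)) (0, p) :=
      (hgmc.differentiable (by simp)).differentiableAt.hasFDerivAt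
    have h2 : HasDerivAt (fun x => gm (0, x)) μ' p := hgd.comp_hasDerivAt p hcurve
    rw [hf0] at h2
    rw [hμ, ← h2.deriv]
  set D : ℝ := fderiv ℝ gm (0, p) (1, 0) with hD
  -- derivative of t ↦ gm (t, P t)
  have hGP : HasDerivAt (fun t => gm (t, P t)) (D + β * μ') 0 := by
    have := key gm hgmc P β hPd
    rwa [hP0] at this
  -- this function is eventually equal to P
  have heq : (fun t => gm (t, P t)) =ᶠ[𝓝 (0 : ℝ)] P := by
    filter_upwards [hPper] with t ht
    simp only [hgm]
    rw [hiter m t (P t)]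
    exact ht
  have hPd' : HasDerivAt P (D + β * μ') 0 := by
    have := hGP.congr_of_eventuallyEq heq.symm
    exact this
  have hDβ : D + β * μ' = β := by
    have := hPd'.deriv
    rw [← hβ] at this
    exact this.symm
  -- B t = F_t^[q] c = gm (t, A t)
  have hBfun : (fun t : ℝ => (fun y => f y + t * v y)^[q] c) = fun t => gm (t, A t) := by
    funext t
    simp only [hgm, hA, hgl, hiter]
    rw [← hq, Function.iterate_add_apply]
  have hBd : HasDerivAt (fun t => gm (t, A t)) (D + α * μ') 0 := by
    have := key gm hgmc A α hAd
    rwa [hA0] at this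
  -- the functions in the statement
  have hAfun : (fun t : ℝ => (fun y => f y + t * v y)^[l] c) = A := by
    funext t
    simp only [hA, hgl]
    rw [hiter l t c]
  have hd1 : deriv (fun t : ℝ => (fun y => f y + t * v y)^[l] c - P t) 0 = α - β := by
    have : (fun t : ℝ => (fun y => f y + t * v y)^[l] c - P t) = fun t => A t - P t := by
      funext t
      rw [← congrFun hAfun t]
    rw [this]
    exact (hAd.sub hPd).deriv
  have hd2 : deriv (fun t : ℝ =>
      (fun y => f y + t * v y)^[q] c - (fun y => f y + t * v y)^[l] c) 0
      = (D + α * μ') - α := by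
    have : (fun t : ℝ => (fun y => f y + t * v y)^[q] c - (fun y => f y + t * v y)^[l] c)
        = fun t => gm (t, A t) - A t := by
      funext t
      rw [← congrFun hBfun t, ← congrFun hAfun t]
    rw [this]
    exact (hBd.sub hAd).deriv
  have hmain : (μ - 1) * (α - β) = (D + α * μ') - α := by
    have hD' : D = β - β * μ' := by linarith
    rw [hD', hμeq]
    ring
  constructor
  · rw [hd1, hd2]; exact hmain
  · rw [hd1, hd2, ← hmain]
    have hμ1' : μ - 1 ≠ 0 := sub_ne_zero.mpr hμ1
    constructor
    · intro h
      exact mul_ne_zero hμ1' h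
    · intro h hc0
      rw [hc0, mul_zero] at h
      exact h rfl
end

section
/- Let f : ℝ → ℝ be differentiable with f({-1, 1}) ⊆ {-1, 1}, f'(x) ≠ 1 for each x ∈ {-1,1} with f(x) = x, f'(-1)·f'(1) ≠ 1, and f'(±1) ≠ 0. Let a, b ∈ ℂ (or ℝ) and define v(x) = a·f(x) + b - f'(x)·(a·x + b). If v(-1) = 0 and v(1) = 0, then a = b = 0 (and hence v ≡ 0). -/
/-- Uniqueness step of the horizontal/vertical splitting: if
`v x = a·f x + b - f' x·(a·x + b)` vanishes at `±1`, where `f` maps `{-1,1}`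
into itself, has no boundary fixed point of multiplier `1`, satisfies
`f'(-1)·f'(1) ≠ 1`, and has no critical point on `{-1,1}`, then `a = b = 0`. -/
theorem affine_vector_field_vanishes
    (f : ℝ → ℝ) (hf : Differentiable ℝ f)
    (hbdry : ∀ x ∈ ({-1, 1} : Set ℝ), f x ∈ ({-1, 1} : Set ℝ))
    (hfix : ∀ x ∈ ({-1, 1} : Set ℝ), f x = x → deriv f x ≠ 1)
    (hcycle : deriv f (-1) * deriv f 1 ≠ 1)
    (hcrit : deriv f (-1) ≠ 0 ∧ deriv f 1 ≠ 0)
    (a b : ℝ) (v : ℝ → ℝ)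
    (hv : ∀ x, v x = a * f x + b - deriv f x * (a * x + b))
    (h1 : v (-1) = 0) (h2 : v 1 = 0) :
    a = 0 ∧ b = 0 := by
  have hm : (-1 : ℝ) ∈ ({-1, 1} : Set ℝ) := by simp
  have hp : (1 : ℝ) ∈ ({-1, 1} : Set ℝ) := by simp
  have hA : a * f (-1) + b - deriv f (-1) * (a * (-1) + b) = 0 := by
    rw [← hv]; exact h1
  have hB : a * f 1 + b - deriv f 1 * (a * 1 + b) = 0 := by
    rw [← hv]; exact h2
  obtain ⟨hc1, hc2⟩ := hcrit
  have hL' := hbdry (-1) hm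
  have hR' := hbdry 1 hp
  simp only [Set.mem_insert_iff, Set.mem_singleton_iff] at hL' hR'
  rcases hL' with hL | hL <;> rcases hR' with hR | hR
  · -- f(-1) = -1, f(1) = -1
    have hd1 := hfix (-1) hm hL
    rw [hL] at hA; rw [hR] at hB
    have hab : -a + b = 0 := by
      rcases mul_eq_zero.1 (show (1 - deriv f (-1)) * (-a + b) = 0 by linarith) with h | h
      · exact absurd (by linarith) hd1
      · exact h
    have ha : a = 0 := by
      rcases mul_eq_zero.1 (show deriv f 1 * a = 0 by
          linear_combination (hab - hB - deriv f 1 * hab) / 2) with h | h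
      · exact absurd h hc2
      · exact h
    exact ⟨ha, by linarith⟩
  · -- f(-1) = -1, f(1) = 1
    have hd1 := hfix (-1) hm hL
    have hd2 := hfix 1 hp hR
    rw [hL] at hA; rw [hR] at hB
    have hab : -a + b = 0 := by
      rcases mul_eq_zero.1 (show (1 - deriv f (-1)) * (-a + b) = 0 by linarith) with h | h
      · exact absurd (by linarith) hd1
      · exact h
    have hab2 : a + b = 0 := by
      rcases mul_eq_zero.1 (show (1 - deriv f 1) * (a + b) = 0 by linarith) with h | h
      · exact absurd (by linarith) hd2
      · exact h
    exact ⟨by linarith, by linarith⟩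
  · -- f(-1) = 1, f(1) = -1
    rw [hL] at hA; rw [hR] at hB
    have key : (1 - deriv f (-1) * deriv f 1) * (a + b) = 0 := by
      linear_combination hA + deriv f (-1) * hB
    have hab : a + b = 0 := by
      rcases mul_eq_zero.1 key with h | h
      · exact absurd (by linarith) hcycle
      · exact h
    have hba : -a + b = 0 := by
      linear_combination hB + deriv f 1 * hab
    exact ⟨by linarith, by linarith⟩
  · -- f(-1) = 1, f(1) = 1
    have hd2 := hfix 1 hp hR
    rw [hL] at hA; rw [hR] at hB
    have hab2 : a + b = 0 := by
      rcases mul_eq_zero.1 (show (1 - deriv f 1) * (a + b) = 0 by linarith) with h | h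
      · exact absurd (by linarith) hd2
      · exact h
    have ha : a = 0 := by
      rcases mul_eq_zero.1 (show deriv f (-1) * a = 0 by
          linear_combination (hA - hab2 + deriv f (-1) * hab2) / 2) with h | h
      · exact absurd h hc1
      · exact h
    exact ⟨ha, by linarith⟩
end

section
/- Let g : ℝ → ℝ be a monotone increasing continuous map with g(x+1) = g(x) + d for some integer d ≥ 2 (a lift of a degree-d covering of the circle). Then there exists a monotone, continuous, surjective map h : ℝ → ℝ with h(x+1) = h(x) + 1 such that h ∘ g = m_d ∘ h, where m_d(x) = d·x. -/
/-!
Write the sought map as `h = id + φ` with `φ` bounded and continuous, and put `ψ = g - d • id`,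
which is `1`-periodic, hence bounded. The equation `h ∘ g = d • h` becomes the fixed-point
equation `φ = d⁻¹ • (ψ + φ ∘ g)`, whose right-hand side is a contraction of ratio `1 / d` on the
Banach space of bounded continuous functions. The closed set of `1`-periodic `φ` with `id + φ`
monotone is invariant (because `d` is an integer and `g` is monotone) and contains `0`, so the
fixed point lies in it. Finally `id + φ` is at bounded distance from the identity, hence surjective.
-/

open Function Set Filter Topology BoundedContinuousFunction

theorem ContractingWith.fixedPoint_mem_of_isClosed {α : Type*} [MetricSpace α] [Nonempty α]
    [CompleteSpace α] {K : NNReal} {f : α → α} (hf : ContractingWith K f) {s : Set α}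
    (hs : IsClosed s) (hsf : MapsTo f s s) {x : α} (hx : x ∈ s) : fixedPoint f hf ∈ s :=
  hs.mem_of_tendsto (hf.tendsto_iterate_fixedPoint x) (.of_forall fun n => hsf.iterate n hx)

theorem periodic_sub_mul_of_map_add_one {f : ℝ → ℝ} {c : ℝ} (hf : ∀ x, f (x + 1) = f x + c) :
    Periodic (fun x => f x - c * x) 1 := fun x => by
  simp only [hf]
  ring

theorem exists_boundedContinuousFunction_eq_sub_mul {f : ℝ → ℝ} {c : ℝ} (hf : Continuous f)
    (hf_lift : ∀ x, f (x + 1) = f x + c) : ∃ ψ : ℝ →ᵇ ℝ, ∀ x, ψ x = f x - c * x := by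
  have hψ : Continuous fun x => f x - c * x := by fun_prop
  obtain ⟨C, hC⟩ := isBounded_iff_forall_norm_le.1 <|
    (periodic_sub_mul_of_map_add_one hf_lift).isBounded_of_continuous one_ne_zero hψ
  exact ⟨.ofNormedAddCommGroup _ hψ C fun x => hC _ (mem_range_self x), fun _ => rfl⟩

theorem BoundedContinuousFunction.surjective_id_add (φ : ℝ →ᵇ ℝ) :
    Surjective fun x => x + φ x := by
  have hφ : ∀ x, |φ x| ≤ ‖φ‖ := φ.norm_coe_le_norm
  refine Continuous.surjective (by fun_prop) ?_ ?_
  · refine tendsto_atTop_mono (fun x => ?_) (tendsto_atTop_add_const_right _ (-‖φ‖) tendsto_id)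
    linarith [id_eq x, (abs_le.1 (hφ x)).1]
  · refine tendsto_atBot_mono (fun x => ?_) (tendsto_atBot_add_const_right _ ‖φ‖ tendsto_id)
    linarith [id_eq x, (abs_le.1 (hφ x)).2]

namespace BoundedContinuousFunction

variable {α : Type*} [TopologicalSpace α]

/-- When `ψ = g - d • id`, the fixed points `φ` of this operator are exactly the bounded
continuous `φ` with `(id + φ) ∘ g = d • (id + φ)`. -/
noncomputable def shubOperator (ψ : α →ᵇ ℝ) (g : C(α, α)) (d : ℝ) (φ : α →ᵇ ℝ) : α →ᵇ ℝ :=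
  d⁻¹ • (ψ + φ.compContinuous g)

theorem shubOperator_apply (ψ : α →ᵇ ℝ) (g : C(α, α)) (d : ℝ) (φ : α →ᵇ ℝ) (x : α) :
    shubOperator ψ g d φ x = d⁻¹ * (ψ x + φ (g x)) := rfl

theorem contractingWith_shubOperator (ψ : α →ᵇ ℝ) (g : C(α, α)) {d : ℝ} (hd : 1 < |d|) :
    ContractingWith ‖d⁻¹‖₊ (shubOperator ψ g d) := by
  refine ⟨?_, LipschitzWith.of_dist_le_mul fun φ χ => ?_⟩
  · rw [nnnorm_inv, ← NNReal.coe_lt_coe]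
    push_cast
    exact inv_lt_one_of_one_lt₀ hd
  · refine (dist_le (by positivity)).2 fun x => ?_
    rw [shubOperator_apply, shubOperator_apply, Real.dist_eq, ← mul_sub, abs_mul,
      add_sub_add_left_eq_sub, coe_nnnorm, Real.norm_eq_abs]
    gcongr
    exact dist_coe_le_dist (f := φ) (g := χ) (g x)

end BoundedContinuousFunction

theorem isClosed_setOf_periodic_and_monotone_id_add :
    IsClosed {φ : ℝ →ᵇ ℝ | Periodic φ 1 ∧ Monotone fun x => x + φ x} := by
  simp only [ofPred_and, Periodic, ofPred_forall]
  refine .inter (isClosed_iInter fun x => ?_) ?_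
  · exact isClosed_eq (continuous_eval_const _) (continuous_eval_const _)
  · exact isClosed_monotone.preimage <|
      continuous_pi fun x => continuous_const.add (continuous_eval_const x)

theorem mapsTo_shubOperator {g : ℝ → ℝ} (hg_cont : Continuous g) (hg_mono : Monotone g) {d : ℤ}
    (hd : 0 < d) (hg_lift : ∀ x, g (x + 1) = g x + d) {ψ : ℝ →ᵇ ℝ} (hψ : ∀ x, ψ x = g x - d * x) :
    MapsTo (ψ.shubOperator ⟨g, hg_cont⟩ d)
      {φ | Periodic φ 1 ∧ Monotone fun x => x + φ x}
      {φ | Periodic φ 1 ∧ Monotone fun x => x + φ x} := by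
  rintro φ ⟨hφ_per, hφ_mono⟩
  have hd_pos : (0 : ℝ) < d := by exact_mod_cast hd
  have h_id_add : ∀ x, x + ψ.shubOperator ⟨g, hg_cont⟩ d φ x = (d : ℝ)⁻¹ * (g x + φ (g x)) := by
    intro x
    rw [shubOperator_apply, ContinuousMap.coe_mk, hψ]
    field_simp
    ring
  refine ⟨fun x => ?_, ?_⟩
  · have hφ_shift : φ (g x + d) = φ (g x) := by simpa using hφ_per.int_mul d (g x)
    simp only [shubOperator_apply, ContinuousMap.coe_mk, hψ, hg_lift, hφ_shift]
    ring
  · simp only [h_id_add]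
    exact (hφ_mono.comp hg_mono).const_mul (inv_nonneg.2 hd_pos.le)

theorem semiconj_of_isFixedPt_shubOperator {g : ℝ → ℝ} (hg_cont : Continuous g) {d : ℝ}
    (hd : d ≠ 0) {ψ φ : ℝ →ᵇ ℝ} (hψ : ∀ x, ψ x = g x - d * x)
    (hφ : IsFixedPt (ψ.shubOperator ⟨g, hg_cont⟩ d) φ) :
    Semiconj (fun x => x + φ x) g (d * ·) := fun x => by
  have h := DFunLike.congr_fun hφ x
  rw [shubOperator_apply, ContinuousMap.coe_mk, hψ] at h
  field_simp at h
  linarith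

/-- Shub's semi-conjugacy: a monotone continuous lift `g` of a degree-`d`
circle covering (`g(x+1) = g(x) + d`, `d ≥ 2`) is semi-conjugate to the
linear expanding map `x ↦ d·x` by a monotone continuous surjective map `h`
with `h(x+1) = h(x) + 1`. -/
theorem semiconjugacy_to_linear_expanding
    (g : ℝ → ℝ) (hg_mono : Monotone g) (hg_cont : Continuous g)
    (d : ℤ) (hd : 2 ≤ d) (hg_lift : ∀ x, g (x + 1) = g x + d) :
    ∃ h : ℝ → ℝ, Monotone h ∧ Continuous h ∧ Function.Surjective h ∧
      (∀ x, h (x + 1) = h x + 1) ∧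
      ∀ x, h (g x) = d * h x := by
  have hd_real : (2 : ℝ) ≤ d := by exact_mod_cast hd
  have hd_abs : 1 < |(d : ℝ)| := by
    rw [abs_of_pos (by linarith)]
    linarith
  obtain ⟨ψ, hψ⟩ := exists_boundedContinuousFunction_eq_sub_mul hg_cont hg_lift
  have hT := ψ.contractingWith_shubOperator ⟨g, hg_cont⟩ hd_abs
  obtain ⟨hφ_per, hφ_mono⟩ := hT.fixedPoint_mem_of_isClosed
    isClosed_setOf_periodic_and_monotone_id_add
    (mapsTo_shubOperator hg_cont hg_mono (by omega) hg_lift hψ) (x := 0)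
    ⟨fun _ => rfl, fun _ _ hxy => by simpa using hxy⟩
  set φ := ContractingWith.fixedPoint _ hT
  refine ⟨fun x => x + φ x, hφ_mono, by fun_prop, φ.surjective_id_add, fun x => ?_,
    semiconj_of_isFixedPt_shubOperator hg_cont (by linarith) hψ hT.fixedPoint_isFixedPt⟩
  simp only [hφ_per x]
  ring
end

section
/- Let X be a normal topological space which is the union of an increasing sequence of open subsets S₁ ⊆ S₂ ⊆ ⋯ such that for each n, the closure of Sₙ is contained in S_{n+1} and the inclusion Sₙ ↪ S_{n+1} is null-homotopic (Sₙ contracts to a point inside S_{n+1}). Then X is contractible. -/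
open Set Filter Topology

namespace ContractibleExhaustion

noncomputable def c01 (t : ℝ) : unitInterval := Set.projIcc 0 1 zero_le_one t

lemma continuous_c01 : Continuous c01 := by
  unfold c01
  exact continuous_projIcc (h := zero_le_one)

lemma c01_zero : c01 0 = 0 := by
  ext
  rw [c01, Set.coe_projIcc]
  norm_num

lemma c01_one_le {t : ℝ} (h : 1 ≤ t) : c01 t = 1 := by
  ext
  rw [c01, Set.coe_projIcc]
  rw [min_eq_left h, max_eq_right zero_le_one]
  norm_num

noncomputable def g1 (t : ℝ) : ℝ := max 0 (min 1 (3*t - 1))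
noncomputable def g2 (t : ℝ) : ℝ := min (3*t) (3 - 3*t)

lemma continuous_g1 : Continuous g1 := by unfold g1; fun_prop
lemma continuous_g2 : Continuous g2 := by unfold g2; fun_prop

lemma g1_of_le {t : ℝ} (h : t ≤ 1/3) : g1 t = 0 := by
  unfold g1
  exact max_eq_left (le_trans (min_le_right _ _) (by linarith))

lemma g1_zero : g1 0 = 0 := g1_of_le (by norm_num)

lemma g1_of_ge {t : ℝ} (h : 2/3 ≤ t) : g1 t = 1 := by
  unfold g1
  rw [min_eq_left (by linarith), max_eq_right zero_le_one]

lemma g1_one : g1 1 = 1 := g1_of_ge (by norm_num)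

lemma g2_zero : g2 0 = 0 := by unfold g2; norm_num

lemma g2_one : g2 1 = 0 := by unfold g2; norm_num

lemma one_le_g2 {t : ℝ} (h1 : 1/3 ≤ t) (h2 : t ≤ 2/3) : 1 ≤ g2 t :=
  le_min (by linarith) (by linarith)

variable {X : Type*} [TopologicalSpace X] {T : ℕ → Set X}

noncomputable def hh (K : ∀ n, C(unitInterval × ↥(T n), ↥(T (n+1)))) (n : ℕ)
    (y : ↥(T n)) (t : ℝ) : ↥(T (n+1)) := K n (c01 t, y)

lemma continuous_hh (K : ∀ n, C(unitInterval × ↥(T n), ↥(T (n+1)))) (n : ℕ) :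
    Continuous (fun p : ↥(T n) × ℝ => hh K n p.1 p.2) :=
  (K n).continuous.comp ((continuous_c01.comp continuous_snd).prodMk continuous_fst)

noncomputable def lam (K : ∀ n, C(unitInterval × ↥(T n), ↥(T (n+1)))) (c : X)
    (hc : ∀ n, c ∈ T n) (n : ℕ) (y : ↥(T n)) (t : ℝ) : ↥(T (n+1)) :=
  if t ≤ 1/2 then hh K n y (g2 t) else hh K n ⟨c, hc n⟩ (g2 t)

lemma continuous_lam (K : ∀ n, C(unitInterval × ↥(T n), ↥(T (n+1)))) (c : X)
    (hc : ∀ n, c ∈ T n)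
    (hK1 : ∀ n (y y' : ↥(T n)), K n (1, y) = K n (1, y')) (n : ℕ) :
    Continuous (fun p : ↥(T n) × ℝ => lam K c hc n p.1 p.2) := by
  unfold lam
  apply Continuous.if_le
  · exact (continuous_hh K n).comp (continuous_fst.prodMk (continuous_g2.comp continuous_snd))
  · exact (continuous_hh K n).comp (continuous_const.prodMk (continuous_g2.comp continuous_snd))
  · exact continuous_snd
  · exact continuous_const
  · intro p hp
    have hg : c01 (g2 p.2) = 1 :=
      c01_one_le (one_le_g2 (by rw [hp]; norm_num) (by rw [hp]; norm_num))
    show hh K n p.1 (g2 p.2) = hh K n _ (g2 p.2)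
    unfold hh
    rw [hg]
    exact hK1 n _ _

noncomputable def qq (K : ∀ n, C(unitInterval × ↥(T n), ↥(T (n+1)))) (c : X)
    (hc : ∀ n, c ∈ T n) (n : ℕ) (y : ↥(T n)) (t u : ℝ) : ↥(T (n+1+1)) :=
  hh K (n+1) (lam K c hc n y ((1-u)*t + u * g1 t)) (u * g2 t)

lemma continuous_qq (K : ∀ n, C(unitInterval × ↥(T n), ↥(T (n+1)))) (c : X)
    (hc : ∀ n, c ∈ T n)
    (hK1 : ∀ n (y y' : ↥(T n)), K n (1, y) = K n (1, y')) (n : ℕ) :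
    Continuous (fun p : ↥(T n) × ℝ × ℝ => (qq K c hc n p.1 p.2.1 p.2.2 : X)) := by
  unfold qq
  refine continuous_subtype_val.comp ?_
  refine (continuous_hh K (n+1)).comp (Continuous.prodMk ?_ ?_)
  · refine (continuous_lam K c hc hK1 n).comp (Continuous.prodMk continuous_fst ?_)
    exact ((continuous_const.sub continuous_snd.snd).mul continuous_snd.fst).add
      (continuous_snd.snd.mul (continuous_g1.comp continuous_snd.fst))
  · exact continuous_snd.snd.mul (continuous_g2.comp continuous_snd.fst)

section Values

variable (K : ∀ n, C(unitInterval × ↥(T n), ↥(T (n+1)))) (c : X) (hc : ∀ n, c ∈ T n)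
variable (hK0 : ∀ n (y : ↥(T n)), (↑(K n (0, y)) : X) = ↑y)
variable (hK1 : ∀ n (y y' : ↥(T n)), K n (1, y) = K n (1, y'))

include hK0 in
lemma hh_zero (n : ℕ) (y : ↥(T n)) : (↑(hh K n y 0) : X) = ↑y := by
  unfold hh; rw [c01_zero]; exact hK0 n y

include hK0 in
lemma lam_zero (n : ℕ) (y : ↥(T n)) : (↑(lam K c hc n y 0) : X) = ↑y := by
  unfold lam
  rw [if_pos (by norm_num : (0:ℝ) ≤ 1/2), g2_zero]
  exact hh_zero K hK0 n y

include hK0 in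
lemma lam_one (n : ℕ) (y : ↥(T n)) : (↑(lam K c hc n y 1) : X) = c := by
  unfold lam
  rw [if_neg (by norm_num : ¬((1:ℝ) ≤ 1/2)), g2_one]
  exact hh_zero K hK0 n ⟨c, hc n⟩

include hK0 in
lemma qq_zero (n : ℕ) (y : ↥(T n)) (u : ℝ) : (↑(qq K c hc n y 0 u) : X) = ↑y := by
  unfold qq
  have e1 : (1-u)*(0:ℝ) + u * g1 0 = 0 := by rw [g1_zero]; ring
  have e2 : u * g2 0 = 0 := by rw [g2_zero]; ring
  rw [e1, e2, hh_zero K hK0 (n+1) _]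
  exact lam_zero K c hc hK0 n y

include hK0 in
lemma qq_one (n : ℕ) (y : ↥(T n)) (u : ℝ) : (↑(qq K c hc n y 1 u) : X) = c := by
  unfold qq
  have e1 : (1-u)*(1:ℝ) + u * g1 1 = 1 := by rw [g1_one]; ring
  have e2 : u * g2 1 = 0 := by rw [g2_one]; ring
  rw [e1, e2, hh_zero K hK0 (n+1) _]
  exact lam_one K c hc hK0 n y

lemma qq_congr {n n' : ℕ} (h : n = n') (y : ↥(T n)) (t u : ℝ) :
    (↑(qq K c hc n y t u) : X) = ↑(qq K c hc n' ⟨↑y, h ▸ y.2⟩ t u) := by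
  subst h; rfl

include hK0 hK1 in
lemma qq_glue (n : ℕ) (y : ↥(T n)) (hy : (↑y : X) ∈ T (n+1)) (t : ℝ) :
    (↑(qq K c hc n y t 1) : X) = ↑(qq K c hc (n+1) ⟨↑y, hy⟩ t 0) := by
  unfold qq
  have er1 : (1-(0:ℝ))*t + 0 * g1 t = t := by ring
  have er2 : (0:ℝ) * g2 t = 0 := by ring
  rw [er1, er2, hh_zero K hK0 (n+1+1) _]
  have el1 : (1-(1:ℝ))*t + 1 * g1 t = g1 t := by ring
  have el2 : (1:ℝ) * g2 t = g2 t := by ring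
  rw [el1, el2]
  -- goal: ↑(hh K (n+1) (lam K c hc n y (g1 t)) (g2 t)) = ↑(lam K c hc (n+1) ⟨↑y,hy⟩ t)
  rcases le_or_gt t (1/3) with h1 | h1
  · rw [g1_of_le h1]
    have hyy : lam K c hc n y 0 = (⟨(↑y : X), hy⟩ : ↥(T (n+1))) :=
      Subtype.ext (lam_zero K c hc hK0 n y)
    rw [hyy]
    unfold lam
    rw [if_pos (le_trans h1 (by norm_num))]
  · rcases le_or_gt t (2/3) with h2 | h2
    · have hg : c01 (g2 t) = 1 := c01_one_le (one_le_g2 h1.le h2)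
      unfold lam hh
      rcases le_or_gt t (1/2) with h3 | h3
      · rw [if_pos h3, hg]
        exact congrArg _ (hK1 (n+1) _ _)
      · rw [if_neg (not_le.mpr h3), hg]
        exact congrArg _ (hK1 (n+1) _ _)
    · rw [g1_of_ge h2.le]
      have hcc : lam K c hc n y 1 = (⟨c, hc (n+1)⟩ : ↥(T (n+1))) :=
        Subtype.ext (lam_one K c hc hK0 n y)
      rw [hcc]
      unfold lam
      rw [if_neg (by intro h; linarith)]

end Values

end ContractibleExhaustion

open ContractibleExhaustion in
set_option maxHeartbeats 2000000 in
/-- If a normal space is exhausted by open sets `S n` with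
`closure (S n) ⊆ S (n+1)` and each inclusion `S n ↪ S (n+1)` null-homotopic,
then the space is contractible. -/
theorem contractible_of_exhaustion
    {X : Type*} [TopologicalSpace X] [NormalSpace X]
    (S : ℕ → Set X) (hopen : ∀ n, IsOpen (S n))
    (hclos : ∀ n, closure (S n) ⊆ S (n + 1))
    (hmono : ∀ n, S n ⊆ S (n + 1))
    (hcover : ⋃ n, S n = Set.univ)
    (hcontr : ∀ n,
      (⟨Set.inclusion (hmono n), continuous_inclusion (hmono n)⟩ :
        C(S n, S (n + 1))).Nullhomotopic) :
    ContractibleSpace X := by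
  classical
  have Smono : Monotone S := monotone_nat_of_le_succ hmono
  choose yc hyc using hcontr
  -- shifted exhaustion
  set T : ℕ → Set X := fun k => S (k + 3) with hTdef
  set KK : ∀ k, C(unitInterval × ↥(T k), ↥(T (k+1))) :=
    fun k => ((hyc (k+3)).some).toContinuousMap with hKKdef
  set c : X := ↑(yc 2) with hcdef
  have hc : ∀ k, c ∈ T k := fun k => Smono (by omega : 3 ≤ k + 3) (yc 2).2
  have hK0 : ∀ k (y : ↥(T k)), (↑(KK k (0, y)) : X) = ↑y := by
    intro k y
    show (↑(((hyc (k+3)).some) (0, y)) : X) = ↑y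
    rw [ContinuousMap.Homotopy.apply_zero]
    rfl
  have hK1 : ∀ k (y y' : ↥(T k)), KK k (1, y) = KK k (1, y') := by
    intro k y y'
    show ((hyc (k+3)).some) (1, y) = ((hyc (k+3)).some) (1, y')
    rw [ContinuousMap.Homotopy.apply_one, ContinuousMap.Homotopy.apply_one]
    rfl
  -- Urysohn functions
  have hdisj : ∀ k : ℕ, Disjoint (closure (S (k+1))) ((S (k+2))ᶜ) := fun k =>
    Set.disjoint_left.mpr fun a ha hac => hac (hclos (k+1) ha)
  choose zeta hz0 hz1 hzmem using fun k : ℕ =>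
    exists_continuous_zero_one_of_isClosed isClosed_closure
      (hopen (k+2)).isClosed_compl (hdisj k)
  set tau : X → ℝ := fun x => 6 + ∑' k, zeta k x with htaudef
  have hz01 : ∀ (k : ℕ) (x : X), zeta k x ∈ Set.Icc (0:ℝ) 1 := fun k x => hzmem k x
  have hzzero : ∀ {x : X} {m k : ℕ}, x ∈ S m → m ≤ k + 1 → zeta k x = 0 := by
    intro x m k hx hmk
    exact hz0 k (subset_closure (Smono hmk hx))
  have hmemS : ∀ x : X, ∃ m, x ∈ S m := by
    intro x
    have hx : x ∈ ⋃ n, S n := by rw [hcover]; trivial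
    exact Set.mem_iUnion.1 hx
  have hsummable : ∀ x : X, Summable (fun k => zeta k x) := by
    intro x
    obtain ⟨m, hm⟩ := hmemS x
    apply summable_of_ne_finset_zero (s := Finset.range m)
    intro k hk
    simp only [Finset.mem_range, not_lt] at hk
    exact hzzero hm (by omega)
  have htau6 : ∀ x, (6:ℝ) ≤ tau x := by
    intro x
    have h0 : 0 ≤ ∑' k, zeta k x := tsum_nonneg (fun k => (hz01 k x).1)
    simp only [htaudef]
    linarith
  have htaucont : Continuous tau := by
    rw [continuous_iff_continuousAt]
    intro x₀
    obtain ⟨m, hm⟩ := hmemS x₀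
    have hloc : ∀ x ∈ S m, tau x = 6 + ∑ k ∈ Finset.range m, zeta k x := by
      intro x hx
      simp only [htaudef]
      congr 1
      refine tsum_eq_sum ?_
      intro k hk
      simp only [Finset.mem_range, not_lt] at hk
      exact hzzero hx (by omega)
    have hcg : ContinuousAt (fun x => 6 + ∑ k ∈ Finset.range m, zeta k x) x₀ := by
      refine Continuous.continuousAt ?_
      exact continuous_const.add (continuous_finset_sum _ (fun k _ => (zeta k).continuous))
    refine hcg.congr ?_
    filter_upwards [(hopen m).mem_nhds hm] with x hx
    exact (hloc x hx).symm
  have htaumem : ∀ (x : X) (n : ℕ), tau x < n + 5 → x ∈ S n := by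
    intro x n hlt
    rcases Nat.eq_zero_or_pos n with hn0 | hn1
    · exfalso
      have := htau6 x
      rw [hn0] at hlt
      push_cast at hlt
      linarith
    by_contra hx
    have hones : ∀ k ∈ Finset.range (n-1), zeta k x = 1 := by
      intro k hk
      simp only [Finset.mem_range] at hk
      refine hz1 k ?_
      intro hmem
      exact hx (Smono (by omega : k + 2 ≤ n) hmem)
    have hsum : (∑ k ∈ Finset.range (n-1), zeta k x) = ((n-1 : ℕ) : ℝ) := by
      rw [Finset.sum_congr rfl hones]
      simp
    have hle : (∑ k ∈ Finset.range (n-1), zeta k x) ≤ ∑' k, zeta k x :=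
      Summable.sum_le_tsum _ (fun k _ => (hz01 k x).1) (hsummable x)
    rw [hsum] at hle
    have hcast : ((n-1:ℕ):ℝ) = (n:ℝ) - 1 := by
      push_cast [hn1]
      ring
    rw [hcast] at hle
    simp only [htaudef] at hlt
    linarith
  -- the floor stage
  have htaupos : ∀ x, (0:ℝ) ≤ tau x := fun x => le_trans (by norm_num) (htau6 x)
  have hfloor : ∀ x, 6 ≤ ⌊tau x⌋₊ := fun x => Nat.le_floor (by exact_mod_cast htau6 x)
  have hmx : ∀ x : X, x ∈ T (⌊tau x⌋₊ - 3) := by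
    intro x
    have h1 : x ∈ S (⌊tau x⌋₊) := by
      refine htaumem x _ ?_
      have := Nat.lt_floor_add_one (tau x)
      linarith
    have h2 : (⌊tau x⌋₊ - 3) + 3 = ⌊tau x⌋₊ := by have := hfloor x; omega
    show x ∈ S ((⌊tau x⌋₊ - 3) + 3)
    rw [h2]
    exact h1
  set F : X → ℝ → X :=
    fun x t => ↑(qq KK c hc (⌊tau x⌋₊ - 3) ⟨x, hmx x⟩ t (tau x - ⌊tau x⌋₊)) with hFdef
  -- continuity of F
  have hFc : Continuous (fun p : X × ℝ => F p.1 p.2) := by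
    rw [continuous_iff_continuousAt]
    rintro ⟨x₀, t₀⟩
    set n₀ : ℕ := ⌊tau x₀⌋₊ with hn₀def
    have h6 : 6 ≤ n₀ := hfloor x₀
    set k₀ : ℕ := n₀ - 3 with hk₀def
    set W : Set X := tau ⁻¹' (Set.Ioo ((n₀:ℝ) - 1) ((n₀:ℝ) + 1)) with hWdef
    have hWopen : IsOpen W := isOpen_Ioo.preimage htaucont
    have hx₀W : x₀ ∈ W := by
      constructor
      · have := Nat.floor_le (htaupos x₀)
        rw [← hn₀def] at this
        linarith
      · have := Nat.lt_floor_add_one (tau x₀)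
        rw [← hn₀def] at this
        exact this
    set A₁ : Set X := W ∩ {x | tau x ≤ (n₀:ℝ)} with hA₁def
    set A₂ : Set X := W ∩ {x | (n₀:ℝ) ≤ tau x} with hA₂def
    have hmem₂ : ∀ x ∈ A₂, x ∈ T k₀ := by
      intro x hx
      have hxS : x ∈ S n₀ := by
        refine htaumem x n₀ ?_
        have := hx.1.2
        linarith
      have h2 : k₀ + 3 = n₀ := by omega
      show x ∈ S (k₀ + 3)
      rw [h2]
      exact hxS
    have hmem₁ : ∀ x ∈ A₁, x ∈ T (k₀ - 1) := by
      intro x hx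
      have hcast : ((n₀ - 1:ℕ):ℝ) = (n₀:ℝ) - 1 := by
        push_cast [show 1 ≤ n₀ by omega]
        ring
      have hxS : x ∈ S (n₀ - 1) := by
        refine htaumem x (n₀ - 1) ?_
        rw [hcast]
        have := hx.2
        simp only [Set.mem_setOf_eq] at this
        linarith
      have h2 : (k₀ - 1) + 3 = n₀ - 1 := by omega
      show x ∈ S ((k₀ - 1) + 3)
      rw [h2]
      exact hxS
    -- pointwise formulas
    have hF₂ : ∀ (x : X) (t : ℝ) (hx : x ∈ A₂), F x t
        = ↑(qq KK c hc k₀ ⟨x, hmem₂ x hx⟩ t (tau x - (n₀:ℝ))) := by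
      intro x t hx
      have hfl : ⌊tau x⌋₊ = n₀ := by
        rw [Nat.floor_eq_iff (htaupos x)]
        exact ⟨hx.2, by exact_mod_cast hx.1.2⟩
      have hidx : ⌊tau x⌋₊ - 3 = k₀ := by omega
      have step1 : F x t = ↑(qq KK c hc k₀ ⟨x, hidx ▸ (hmx x)⟩ t (tau x - ⌊tau x⌋₊)) :=
        qq_congr KK c hc hidx ⟨x, hmx x⟩ t _
      rw [step1]
      have hu : (tau x - (⌊tau x⌋₊:ℝ)) = tau x - (n₀:ℝ) := by rw [hfl]
      rw [hu]
    have hF₁ : ∀ (x : X) (t : ℝ) (hx : x ∈ A₁), F x t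
        = ↑(qq KK c hc (k₀ - 1) ⟨x, hmem₁ x hx⟩ t (tau x - (n₀:ℝ) + 1)) := by
      intro x t hx
      have hcast : ((n₀ - 1:ℕ):ℝ) = (n₀:ℝ) - 1 := by
        push_cast [show 1 ≤ n₀ by omega]
        ring
      rcases lt_or_eq_of_le (show tau x ≤ (n₀:ℝ) from hx.2) with hlt | heq
      · -- floor = n₀ - 1
        have hfl : ⌊tau x⌋₊ = n₀ - 1 := by
          rw [Nat.floor_eq_iff (htaupos x)]
          constructor
          · rw [hcast]
            have := hx.1.1
            linarith
          · rw [hcast]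
            linarith
        have hidx : ⌊tau x⌋₊ - 3 = k₀ - 1 := by omega
        have step1 : F x t = ↑(qq KK c hc (k₀-1) ⟨x, hidx ▸ (hmx x)⟩ t (tau x - ⌊tau x⌋₊)) :=
          qq_congr KK c hc hidx ⟨x, hmx x⟩ t _
        rw [step1]
        have hu : (tau x - (⌊tau x⌋₊:ℝ)) = tau x - (n₀:ℝ) + 1 := by
          rw [hfl, hcast]
          ring
        rw [hu]
      · -- tau x = n₀ : use the gluing lemma
        have hx2 : x ∈ A₂ := ⟨hx.1, le_of_eq heq.symm⟩
        have hyT : x ∈ T (k₀ - 1 + 1) := by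
          show x ∈ S ((k₀ - 1 + 1) + 3)
          have h2 : (k₀ - 1 + 1) + 3 = k₀ + 3 := by omega
          rw [h2]
          exact hmem₂ x hx2
        have hidx2 : k₀ - 1 + 1 = k₀ := by omega
        have hglue := qq_glue KK c hc hK0 hK1 (k₀ - 1) ⟨x, hmem₁ x hx⟩ hyT t
        have hu1 : tau x - (n₀:ℝ) + 1 = 1 := by rw [← heq]; ring
        have hu0 : tau x - (n₀:ℝ) = 0 := by rw [← heq]; ring
        rw [hu1, hglue, hF₂ x t hx2, hu0]
        exact (qq_congr KK c hc hidx2 ⟨_, hyT⟩ t 0).symm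
    -- continuity on the two pieces
    have hcont₂ : ContinuousOn (fun p : X × ℝ => F p.1 p.2) (A₂ ×ˢ (Set.univ : Set ℝ)) := by
      rw [continuousOn_iff_continuous_restrict]
      have hmap : Continuous (fun w : ↥(A₂ ×ˢ (Set.univ : Set ℝ)) =>
          ((⟨w.1.1, hmem₂ w.1.1 w.2.1⟩ : ↥(T k₀)), ((w.1.2 : ℝ), tau w.1.1 - (n₀:ℝ)))) := by
        refine Continuous.prodMk ?_ (Continuous.prodMk ?_ ?_)
        · exact Continuous.subtype_mk (continuous_fst.comp continuous_subtype_val) _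
        · exact continuous_snd.comp continuous_subtype_val
        · exact (htaucont.comp (continuous_fst.comp continuous_subtype_val)).sub continuous_const
      have hcomp : Continuous (fun w : ↥(A₂ ×ˢ (Set.univ : Set ℝ)) =>
          (↑(qq KK c hc k₀ ⟨w.1.1, hmem₂ w.1.1 w.2.1⟩ w.1.2 (tau w.1.1 - (n₀:ℝ))) : X)) :=
        (continuous_qq KK c hc hK1 k₀).comp hmap
      refine Continuous.congr hcomp ?_
      intro w
      exact (hF₂ w.1.1 w.1.2 w.2.1).symm
    have hcont₁ : ContinuousOn (fun p : X × ℝ => F p.1 p.2) (A₁ ×ˢ (Set.univ : Set ℝ)) := by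
      rw [continuousOn_iff_continuous_restrict]
      have hmap : Continuous (fun w : ↥(A₁ ×ˢ (Set.univ : Set ℝ)) =>
          ((⟨w.1.1, hmem₁ w.1.1 w.2.1⟩ : ↥(T (k₀-1))), ((w.1.2 : ℝ), tau w.1.1 - (n₀:ℝ) + 1))) := by
        refine Continuous.prodMk ?_ (Continuous.prodMk ?_ ?_)
        · exact Continuous.subtype_mk (continuous_fst.comp continuous_subtype_val) _
        · exact continuous_snd.comp continuous_subtype_val
        · exact ((htaucont.comp (continuous_fst.comp continuous_subtype_val)).sub
            continuous_const).add continuous_const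
      have hcomp : Continuous (fun w : ↥(A₁ ×ˢ (Set.univ : Set ℝ)) =>
          (↑(qq KK c hc (k₀-1) ⟨w.1.1, hmem₁ w.1.1 w.2.1⟩ w.1.2 (tau w.1.1 - (n₀:ℝ) + 1)) : X)) :=
        (continuous_qq KK c hc hK1 (k₀-1)).comp hmap
      refine Continuous.congr hcomp ?_
      intro w
      exact (hF₁ w.1.1 w.1.2 w.2.1).symm
    -- glue
    have hCW₁ : ContinuousWithinAt (fun p : X × ℝ => F p.1 p.2)
        (A₁ ×ˢ (Set.univ : Set ℝ)) (x₀, t₀) := by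
      rcases le_or_gt (tau x₀) (n₀:ℝ) with hle | hlt
      · exact hcont₁.continuousWithinAt ⟨⟨hx₀W, hle⟩, trivial⟩
      · apply continuousWithinAt_of_notMem_closure
        intro hcl
        have hcls : IsClosed {p : X × ℝ | tau p.1 ≤ (n₀:ℝ)} :=
          isClosed_le (htaucont.comp continuous_fst) continuous_const
        have hsub : (A₁ ×ˢ (Set.univ : Set ℝ)) ⊆ {p : X × ℝ | tau p.1 ≤ (n₀:ℝ)} :=
          fun p hp => hp.1.2
        have hin : (x₀, t₀) ∈ {p : X × ℝ | tau p.1 ≤ (n₀:ℝ)} :=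
          (hcls.closure_subset_iff.2 hsub) hcl
        simp only [Set.mem_setOf_eq] at hin
        linarith
    have hCW₂ : ContinuousWithinAt (fun p : X × ℝ => F p.1 p.2)
        (A₂ ×ˢ (Set.univ : Set ℝ)) (x₀, t₀) := by
      refine hcont₂.continuousWithinAt ⟨⟨hx₀W, ?_⟩, trivial⟩
      show (n₀:ℝ) ≤ tau x₀
      rw [hn₀def]
      exact Nat.floor_le (htaupos x₀)
    have hunion := hCW₁.union hCW₂
    have hcov : (A₁ ×ˢ (Set.univ : Set ℝ)) ∪ (A₂ ×ˢ (Set.univ : Set ℝ)) = W ×ˢ (Set.univ : Set ℝ) := by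
      rw [← Set.union_prod]
      congr 1
      rw [hA₁def, hA₂def, ← Set.inter_union_distrib_left]
      have : {x | tau x ≤ (n₀:ℝ)} ∪ {x | (n₀:ℝ) ≤ tau x} = Set.univ := by
        ext x
        simp only [Set.mem_union, Set.mem_setOf_eq, Set.mem_univ, iff_true]
        exact le_total _ _
      rw [this, Set.inter_univ]
    rw [hcov] at hunion
    exact hunion.continuousAt (prod_mem_nhds (hWopen.mem_nhds hx₀W) Filter.univ_mem)
  -- endpoints
  have hF0 : ∀ x, F x 0 = x := by
    intro x
    exact qq_zero KK c hc hK0 _ _ _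
  have hF1 : ∀ x, F x 1 = c := by
    intro x
    exact qq_one KK c hc hK0 _ _ _
  -- conclude
  clear_value F c
  rw [contractible_iff_id_nullhomotopic]
  refine ⟨c, ⟨?_⟩⟩
  refine
    { toFun := fun p => F p.2 ↑p.1
      continuous_toFun := hFc.comp
        (continuous_snd.prodMk (continuous_subtype_val.comp continuous_fst))
      map_zero_left := ?_
      map_one_left := ?_ }
  · intro x
    show F x ((0 : unitInterval) : ℝ) = x
    rw [show ((0 : unitInterval) : ℝ) = (0:ℝ) from rfl]
    exact hF0 x
  · intro x
    show F x ((1 : unitInterval) : ℝ) = c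
    rw [show ((1 : unitInterval) : ℝ) = (1:ℝ) from rfl]
    exact hF1 x
end
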